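/- Under the balanced K-block SBM with B = pI + rJ (0 < r < p+r < 1), the simple random walk P_𝒜 and the anti-cluster walk P_W̃ have the same (uniform) stationary distribution π̄, and for any bounded y: V → ℝ and any t ≥ 1, the stationary autocovariances satisfy Σ_{j=2}^{N} ⟨y, f̄^{ac}_j⟩²_π̄ λ_j(P_W̃)^t + ε ≤ Σ_{j=2}^{N} ⟨y, f̄_j⟩²_π̄ λ_j(P_𝒜)^t whenever Σ_{j=2}^{K} ⟨y, f̄_j⟩²_π̄ > 0, where ε > 0 depends only on K, p, r, t and the projection norm of y. -/

import Mathlib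

/-!
Both walks are row normalisations of symmetric matrices with constant row sums: `A`, `J - A` and
hence `W = (A(J - A) + (J - A)A) ⊙ A` are all of the form "`a` inside a block, `b` across blocks",
a family closed under sums, products (for balanced blocks) and Hadamard products. So the uniform
distribution is stationary for both.

For the autocovariances, only the eigenvalues `ν` resp. `μ` on the indices `1 ≤ j < K` contribute.
Since the `√π̄`-rescaled top-`K` eigenvectors of the two walks are orthonormal with the same span,
they differ by an orthogonal `K × K` matrix; hence
`Σ_{j<K} ⟨y, f̄_j⟩²_π̄ = Σ_{j<K} ⟨y, f̄^{ac}_j⟩²_π̄`.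
The `j = 0` terms agree since both leading eigenvectors are constant, so the gap is
`(ν^t - μ^t) Σ_{j=1}^{K-1} ⟨y, f̄_j⟩²_π̄ > 0`.
-/

open Finset Matrix

theorem vecMul_const_rowNormalize {ι : Type*} [Fintype ι] {M : Matrix ι ι ℝ} (hM : M.IsSymm)
    {R : ℝ} (hR : R ≠ 0) (hrow : ∀ i, ∑ w, M i w = R) (c : ℝ) :
    vecMul (fun _ => c) (of fun i j => M i j / ∑ w, M i w) = fun _ => c := by
  funext j
  have hcol : ∑ i, M i j = R := by rw [← hrow j]; exact sum_congr rfl fun i _ => hM.apply j i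
  simp only [vecMul, dotProduct, of_apply, hrow, mul_div, ← sum_div, ← mul_sum, hcol]
  field_simp

theorem mul_apply_pos_of_pos {ι : Type*} [Fintype ι] [Nonempty ι] {X Y : Matrix ι ι ℝ}
    (hX : ∀ i j, 0 < X i j) (hY : ∀ i j, 0 < Y i j) (i j : ι) : 0 < (X * Y) i j :=
  sum_pos (fun w _ => mul_pos (hX i w) (hY w j)) univ_nonempty

def antiClusterWeight {ι : Type*} [Fintype ι] (A : Matrix ι ι ℝ) : Matrix ι ι ℝ :=
  (A * ((of fun _ _ => 1) - A) + ((of fun _ _ => 1) - A) * A) ⊙ A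

theorem antiClusterWeight_pos {ι : Type*} [Fintype ι] [Nonempty ι] {A : Matrix ι ι ℝ}
    (hA : ∀ i j, A i j ∈ Set.Ioo 0 1) (i j : ι) : 0 < antiClusterWeight A i j := by
  have hpos : ∀ i j, 0 < A i j := fun i j => (hA i j).1
  have hcompl : ∀ i j, 0 < ((of fun _ _ => 1) - A : Matrix ι ι ℝ) i j := fun i j => by
    simpa using (hA i j).2
  exact mul_pos (add_pos (mul_apply_pos_of_pos hpos hcompl i j)
    (mul_apply_pos_of_pos hcompl hpos i j)) (hpos i j)

section BlockConst

variable {ι κ : Type*} [DecidableEq κ]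

def blockConst (z : ι → κ) (a b : ℝ) : Matrix ι ι ℝ := of fun i j => if z i = z j then a else b

theorem blockConst_isSymm (z : ι → κ) (a b : ℝ) : (blockConst z a b).IsSymm := by
  ext i j; simp [blockConst, eq_comm]

theorem blockConst_add (z : ι → κ) (a b a' b' : ℝ) :
    blockConst z a b + blockConst z a' b' = blockConst z (a + a') (b + b') := by
  ext i j; simp only [blockConst, Matrix.add_apply, of_apply]; split_ifs <;> rfl

theorem blockConst_hadamard (z : ι → κ) (a b a' b' : ℝ) :
    blockConst z a b ⊙ blockConst z a' b' = blockConst z (a * a') (b * b') := by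
  ext i j; simp only [blockConst, hadamard_apply, of_apply]; split_ifs <;> rfl

theorem blockConst_apply_mem (z : ι → κ) {S : Set ℝ} {a b : ℝ} (ha : a ∈ S) (hb : b ∈ S)
    (i j : ι) : blockConst z a b i j ∈ S := by
  simp only [blockConst, of_apply]; split_ifs <;> assumption

variable [Fintype ι] {z : ι → κ} {s : ℕ} (hbal : ∀ k, (univ.filter (fun i => z i = k)).card = s)
include hbal

theorem sum_ite_fiber_eq_mul (k : κ) (a : ℝ) : ∑ w, (if z w = k then a else 0) = s * a := by
  rw [← sum_filter, sum_const, hbal, nsmul_eq_mul]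

theorem sum_blockConst_apply (a b : ℝ) (i : ι) :
    ∑ w, blockConst z a b i w = Fintype.card ι * b + s * (a - b) := by
  have hsplit : ∀ w, blockConst z a b i w = b + if z w = z i then a - b else 0 := fun w => by
    simp only [blockConst, of_apply, eq_comm]; split_ifs <;> ring
  simp only [hsplit, sum_add_distrib, sum_const, card_univ, nsmul_eq_mul, sum_ite_fiber_eq_mul hbal]

theorem blockConst_mul (a b a' b' : ℝ) :
    blockConst z a b * blockConst z a' b' =
      blockConst z (Fintype.card ι * b * b' + s * ((a - b) * b' + b * (a' - b'))
          + s * (a - b) * (a' - b'))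
        (Fintype.card ι * b * b' + s * ((a - b) * b' + b * (a' - b'))) := by
  ext i j
  have hsplit : ∀ w, blockConst z a b i w * blockConst z a' b' w j =
      b * b' + (if z w = z i then (a - b) * b' else 0) + (if z w = z j then b * (a' - b') else 0)
        + if z w = z i then (if z i = z j then (a - b) * (a' - b') else 0) else 0 := fun w => by
    simp only [blockConst, of_apply]
    split_ifs <;> grind
  simp only [mul_apply, hsplit, sum_add_distrib, sum_const, card_univ, nsmul_eq_mul,
    sum_ite_fiber_eq_mul hbal]
  simp only [blockConst, of_apply]
  split_ifs <;> ring

theorem vecMul_const_rowNormalize_blockConst [Nonempty ι] {a b : ℝ}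
    (hpos : ∀ i j, 0 < blockConst z a b i j) (c : ℝ) :
    vecMul (fun _ => c) (of fun i j => blockConst z a b i j / ∑ w, blockConst z a b i w) =
      fun _ => c := by
  obtain ⟨i₀⟩ := ‹Nonempty ι›
  refine vecMul_const_rowNormalize (blockConst_isSymm z a b) ?_ (sum_blockConst_apply hbal a b) c
  rw [← sum_blockConst_apply hbal a b i₀]
  exact (sum_pos (fun w _ => hpos i₀ w) univ_nonempty).ne'

theorem exists_antiClusterWeight_blockConst (a b : ℝ) :
    ∃ a' b', antiClusterWeight (blockConst z a b) = blockConst z a' b' := by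
  have hJ : (of fun _ _ => (1 : ℝ)) - blockConst z a b = blockConst z (1 - a) (1 - b) := by
    ext i j; simp only [blockConst, of_apply, Matrix.sub_apply]; split_ifs <;> rfl
  exact ⟨_, _, by rw [antiClusterWeight, hJ, blockConst_mul hbal, blockConst_mul hbal,
    blockConst_add, blockConst_hadamard]⟩

end BlockConst

theorem dotProduct_mulVec_self_eq_of_mul_transpose_eq_one {m n : Type*} [Fintype m] [Fintype n]
    [DecidableEq m] {G H : Matrix m n ℝ} (hG : G * Gᵀ = 1) (hH : H * Hᵀ = 1)
    (hspan : Submodule.span ℝ (Set.range H) ≤ Submodule.span ℝ (Set.range G)) (x : n → ℝ) :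
    H *ᵥ x ⬝ᵥ H *ᵥ x = G *ᵥ x ⬝ᵥ G *ᵥ x := by
  have hrow : ∀ k, ∃ c : m → ℝ, c ᵥ* G = H k := fun k => by
    simpa [vecMul_eq_sum] using
      (Submodule.mem_span_range_iff_exists_fun ℝ).mp (hspan (Submodule.subset_span ⟨k, rfl⟩))
  choose C hC using hrow
  have hHC : H = of C * G := by ext k i; simp [← hC k, vecMul, mul_apply, dotProduct]
  have hCC : (of C)ᵀ * of C = 1 := by
    rw [mul_eq_one_comm, ← hH, hHC, transpose_mul, Matrix.mul_assoc, ← Matrix.mul_assoc G, hG,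
      Matrix.one_mul]
  rw [hHC, ← mulVec_mulVec, dotProduct_mulVec, ← mulVec_transpose, mulVec_mulVec, hCC,
    one_mulVec]

theorem sum_sq_weightedInner_eq_of_span_le {m n : Type*} [Fintype m] [Fintype n] [DecidableEq m]
    {π : n → ℝ} (hπ : ∀ i, 0 ≤ π i) {f h : m → n → ℝ}
    (hf : ∀ j k, ∑ i, f j i * f k i * π i = if j = k then 1 else 0)
    (hh : ∀ j k, ∑ i, h j i * h k i * π i = if j = k then 1 else 0)
    (hspan : Submodule.span ℝ (Set.range fun j i => h j i * √(π i)) ≤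
      Submodule.span ℝ (Set.range fun j i => f j i * √(π i))) (y : n → ℝ) :
    ∑ j, (∑ i, y i * h j i * π i) ^ 2 = ∑ j, (∑ i, y i * f j i * π i) ^ 2 := by
  have hsq : ∀ i, √(π i) * √(π i) = π i := fun i => Real.mul_self_sqrt (hπ i)
  have horth : ∀ g : m → n → ℝ, (∀ j k, ∑ i, g j i * g k i * π i = if j = k then 1 else 0) →
      (of fun j i => g j i * √(π i)) * (of fun j i => g j i * √(π i))ᵀ = 1 := fun g hg => by
    ext j k
    rw [mul_apply, one_apply, ← hg]
    exact sum_congr rfl fun i _ => by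
      simp only [of_apply, transpose_apply]; linear_combination g j i * g k i * hsq i
  have hnorm : ∀ g : m → n → ℝ, (of fun j i => g j i * √(π i)) *ᵥ (fun i => y i * √(π i)) ⬝ᵥ
      (of fun j i => g j i * √(π i)) *ᵥ (fun i => y i * √(π i)) =
        ∑ j, (∑ i, y i * g j i * π i) ^ 2 := fun g => by
    simp only [dotProduct, mulVec, of_apply, ← sq]
    exact sum_congr rfl fun j _ => congrArg (· ^ 2) (sum_congr rfl fun i _ => by
      linear_combination y i * g j i * hsq i)
  rw [← hnorm, ← hnorm]
  exact dotProduct_mulVec_self_eq_of_mul_transpose_eq_one (horth f hf) (horth h hh) hspan _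

theorem Fin.sum_univ_castLE {M : Type*} [AddCommMonoid M] {n m : ℕ} (h : n ≤ m) (f : Fin m → M) :
    ∑ i : Fin n, f (Fin.castLE h i) = ∑ i ∈ univ.filter (fun i : Fin m => (i : ℕ) < n), f i := by
  refine (sum_map univ (Fin.castLEEmb h) f).symm.trans (congrArg (fun t => ∑ i ∈ t, f i) ?_)
  ext i
  simp only [mem_map, mem_univ, true_and, mem_filter, Fin.coe_castLEEmb]
  exact ⟨fun ⟨j, hj⟩ => hj ▸ j.isLt, fun hi => ⟨⟨i, hi⟩, rfl⟩⟩

theorem sum_filter_ne_zero_mul_pow_eq {N K t : ℕ} (ht : t ≠ 0) (c lam : Fin N → ℝ) {ν : ℝ}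
    (hν : ∀ j : Fin N, 1 ≤ (j : ℕ) → (j : ℕ) < K → lam j = ν)
    (hzero : ∀ j : Fin N, K ≤ (j : ℕ) → lam j = 0) :
    ∑ j ∈ univ.filter (fun j : Fin N => (j : ℕ) ≠ 0), c j * lam j ^ t =
      (∑ j ∈ univ.filter (fun j : Fin N => 1 ≤ (j : ℕ) ∧ (j : ℕ) < K), c j) * ν ^ t := by
  have hsub : univ.filter (fun j : Fin N => 1 ≤ (j : ℕ) ∧ (j : ℕ) < K) ⊆
      univ.filter (fun j : Fin N => (j : ℕ) ≠ 0) :=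
    monotone_filter_right _ fun j hj => by omega
  rw [← sum_subset hsub fun j hj hjS => ?_, sum_mul]
  · exact sum_congr rfl fun j hj => by
      rw [mem_filter] at hj; rw [hν j hj.2.1 hj.2.2]
  · simp only [mem_filter, mem_univ, true_and, not_and, not_lt] at hj hjS
    rw [hzero j (hjS (by omega)), zero_pow ht, mul_zero]

theorem sum_filter_pos_lt_eq_of_sum_filter_lt_eq {N K : ℕ} {F G : Fin N → ℝ}
    (h0 : ∀ j : Fin N, (j : ℕ) = 0 → F j = G j)
    (hsum : ∑ j ∈ univ.filter (fun j : Fin N => (j : ℕ) < K), F j =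
      ∑ j ∈ univ.filter (fun j : Fin N => (j : ℕ) < K), G j) :
    ∑ j ∈ univ.filter (fun j : Fin N => 1 ≤ (j : ℕ) ∧ (j : ℕ) < K), F j =
      ∑ j ∈ univ.filter (fun j : Fin N => 1 ≤ (j : ℕ) ∧ (j : ℕ) < K), G j := by
  have hsplit : ∀ H : Fin N → ℝ, ∑ j ∈ univ.filter (fun j : Fin N => (j : ℕ) < K), H j =
      ∑ j ∈ univ.filter (fun j : Fin N => (j : ℕ) < K ∧ (j : ℕ) = 0), H j +
        ∑ j ∈ univ.filter (fun j : Fin N => 1 ≤ (j : ℕ) ∧ (j : ℕ) < K), H j := fun H => by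
    rw [← sum_filter_add_sum_filter_not _ (fun j : Fin N => (j : ℕ) = 0), filter_filter,
      filter_filter]
    congr 2
    exact filter_congr fun j _ => by omega
  have h0sum : ∑ j ∈ univ.filter (fun j : Fin N => (j : ℕ) < K ∧ (j : ℕ) = 0), F j =
      ∑ j ∈ univ.filter (fun j : Fin N => (j : ℕ) < K ∧ (j : ℕ) = 0), G j :=
    sum_congr rfl fun j hj => h0 j (mem_filter.mp hj).2.2
  rw [hsplit, hsplit G, h0sum] at hsum
  exact add_left_cancel hsum

theorem stmt18_general {N K s : ℕ} (hK : 2 ≤ K) (hKN : K ≤ N)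
    (z : Fin N → Fin K)
    (hbal : ∀ k, (Finset.univ.filter (fun i => z i = k)).card = s)
    (p r : ℝ) (hr : 0 < r) (hpr : r < p + r) (h1 : p + r < 1)
    (pibar : Fin N → ℝ) (hpibar : ∀ u, pibar u = 1 / N)
    (A Abar W PA PW : Matrix (Fin N) (Fin N) ℝ)
    (hA : A = Matrix.of fun i j => (if z i = z j then p else 0) + r)
    (hAbar : Abar = (Matrix.of fun _ _ => (1 : ℝ)) - A)
    (hW : W = Matrix.hadamard (A * Abar + Abar * A) A)
    (hPA : PA = Matrix.of fun i j => A i j / (∑ w, A i w))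
    (hPW : PW = Matrix.of fun i j => W i j / (∑ w, W i w))
    (f fac : Fin N → Fin N → ℝ) (lam lamac : Fin N → ℝ) (ν μ : ℝ)
    (hgap : 0 ≤ μ ∧ μ < ν ∧ ν < 1)
    (horth : ∀ j k, (∑ i, f j i * f k i * pibar i) = if j = k then (1 : ℝ) else 0)
    (horthac : ∀ j k,
      (∑ i, fac j i * fac k i * pibar i) = if j = k then (1 : ℝ) else 0)
    (hlam2 : ∀ j : Fin N, 1 ≤ (j : ℕ) → (j : ℕ) < K → lam j = ν ∧ lamac j = μ)
    (hlamz : ∀ j : Fin N, K ≤ (j : ℕ) → lam j = 0 ∧ lamac j = 0)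
    (hconst : ∀ j : Fin N, (j : ℕ) = 0 →
      (f j = fun _ => (1 : ℝ)) ∧ (fac j = fun _ => (1 : ℝ)))
    (hspan :
      Submodule.span ℝ (Set.range (fun j : Fin K =>
          fun i => f (Fin.castLE hKN j) i * Real.sqrt (pibar i)))
        = Submodule.span ℝ (Set.range (fun j : Fin K =>
          fun i => fac (Fin.castLE hKN j) i * Real.sqrt (pibar i))))
    (y : Fin N → ℝ) (t : ℕ) (ht : 1 ≤ t)
    (hY : 0 < ∑ j ∈ Finset.univ.filter
        (fun j : Fin N => 1 ≤ (j : ℕ) ∧ (j : ℕ) < K),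
        (∑ i, y i * f j i * pibar i) ^ 2) :
    (Matrix.vecMul pibar PA = pibar ∧ Matrix.vecMul pibar PW = pibar) ∧
    ∃ ε > (0 : ℝ),
      (∑ j ∈ Finset.univ.filter (fun j : Fin N => (j : ℕ) ≠ 0),
          (∑ i, y i * fac j i * pibar i) ^ 2 * lamac j ^ t) + ε
        ≤ ∑ j ∈ Finset.univ.filter (fun j : Fin N => (j : ℕ) ≠ 0),
            (∑ i, y i * f j i * pibar i) ^ 2 * lam j ^ t := by
  obtain ⟨hμ, hμν, -⟩ := hgap
  have : Nonempty (Fin N) := ⟨⟨0, by omega⟩⟩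
  have hπ : pibar = fun _ => 1 / (N : ℝ) := funext hpibar
  have hA' : A = blockConst z (p + r) r := by
    rw [hA]; ext i j; simp only [blockConst, of_apply]; split_ifs <;> ring
  have hAmem := blockConst_apply_mem z (S := Set.Ioo 0 1) ⟨by linarith, h1⟩ ⟨hr, by linarith⟩
  obtain ⟨a, b, hWb⟩ := exists_antiClusterWeight_blockConst hbal (p + r) r
  have hWpos : ∀ i j, 0 < blockConst z a b i j := hWb ▸ antiClusterWeight_pos hAmem
  refine ⟨⟨?_, ?_⟩, ?_⟩
  · rw [hPA, hA', hπ]; exact vecMul_const_rowNormalize_blockConst hbal (fun i j => (hAmem i j).1) _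
  · rw [hPW, show W = antiClusterWeight A by rw [hW, hAbar]; rfl, hA', hWb, hπ]
    exact vecMul_const_rowNormalize_blockConst hbal hWpos _
  have hpibar_nonneg : ∀ i, 0 ≤ pibar i := fun i => by rw [hpibar]; positivity
  have hproj : ∑ j ∈ univ.filter (fun j : Fin N => 1 ≤ (j : ℕ) ∧ (j : ℕ) < K),
      (∑ i, y i * fac j i * pibar i) ^ 2 =
        ∑ j ∈ univ.filter (fun j : Fin N => 1 ≤ (j : ℕ) ∧ (j : ℕ) < K),
          (∑ i, y i * f j i * pibar i) ^ 2 := by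
    refine sum_filter_pos_lt_eq_of_sum_filter_lt_eq (fun j hj => ?_) ?_
    · rw [(hconst j hj).1, (hconst j hj).2]
    rw [← Fin.sum_univ_castLE hKN, ← Fin.sum_univ_castLE hKN]
    exact sum_sq_weightedInner_eq_of_span_le hpibar_nonneg
      (fun j k => by simp only [horth, Fin.castLE_inj])
      (fun j k => by simp only [horthac, Fin.castLE_inj]) hspan.ge y
  refine ⟨(ν ^ t - μ ^ t) * _, mul_pos (sub_pos.2 (pow_lt_pow_left₀ hμν hμ (by omega))) hY, ?_⟩
  rw [sum_filter_ne_zero_mul_pow_eq (by omega) _ lamac (fun j h1 h2 => (hlam2 j h1 h2).2)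
      (fun j h => (hlamz j h).2),
    sum_filter_ne_zero_mul_pow_eq (by omega) _ lam (fun j h1 h2 => (hlam2 j h1 h2).1)
      (fun j h => (hlamz j h).1), hproj]
  linarith

/-- Dependency reduction of AC-RDS on the balanced `K`-block SBM population
graph: the simple random walk `P_𝒜` and the anti-cluster walk `P_W̃` share the
uniform stationary distribution `π̄`, and for any `y` and `t ≥ 1`, whenever
the projection `Σ_{j=2}^K ⟨y, f̄_j⟩²_π̄ > 0` there is an `ε > 0` with
`Σ_{j≥2} ⟨y, f̄^{ac}_j⟩²_π̄ λ_j(P_W̃)^t + ε ≤ Σ_{j≥2} ⟨y, f̄_j⟩²_π̄ λ_j(P_𝒜)^t`.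
The eigenstructure facts (spectra `{1, ν^{(K-1)}, 0^{(N-K)}}` and
`{1, μ^{(K-1)}, 0^{(N-K)}}` with `0 ≤ μ < ν < 1`, coinciding top-`K`
eigenspaces, leading eigenvectors constant) are supplied as hypotheses. -/
theorem stmt18 {N K s : ℕ} (hK : 2 ≤ K) (hs : 0 < s) (hN : N = s * K)
    (hKN : K ≤ N)
    (z : Fin N → Fin K)
    (hbal : ∀ k, (Finset.univ.filter (fun i => z i = k)).card = s)
    (p r : ℝ) (hr : 0 < r) (hpr : r < p + r) (h1 : p + r < 1)
    (pibar : Fin N → ℝ) (hpibar : ∀ u, pibar u = 1 / N)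
    (A Abar W PA PW : Matrix (Fin N) (Fin N) ℝ)
    (hA : A = Matrix.of fun i j => (if z i = z j then p else 0) + r)
    (hAbar : Abar = (Matrix.of fun _ _ => (1 : ℝ)) - A)
    (hW : W = Matrix.hadamard (A * Abar + Abar * A) A)
    (hPA : PA = Matrix.of fun i j => A i j / (∑ w, A i w))
    (hPW : PW = Matrix.of fun i j => W i j / (∑ w, W i w))
    (f fac : Fin N → Fin N → ℝ) (lam lamac : Fin N → ℝ) (ν μ : ℝ)
    (hgap : 0 ≤ μ ∧ μ < ν ∧ ν < 1)
    (heig : ∀ j, PA.mulVec (f j) = lam j • f j)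
    (heigac : ∀ j, PW.mulVec (fac j) = lamac j • fac j)
    (horth : ∀ j k, (∑ i, f j i * f k i * pibar i) = if j = k then (1 : ℝ) else 0)
    (horthac : ∀ j k,
      (∑ i, fac j i * fac k i * pibar i) = if j = k then (1 : ℝ) else 0)
    (hlam0 : ∀ j : Fin N, (j : ℕ) = 0 → lam j = 1 ∧ lamac j = 1)
    (hlam2 : ∀ j : Fin N, 1 ≤ (j : ℕ) → (j : ℕ) < K → lam j = ν ∧ lamac j = μ)
    (hlamz : ∀ j : Fin N, K ≤ (j : ℕ) → lam j = 0 ∧ lamac j = 0)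
    (hconst : ∀ j : Fin N, (j : ℕ) = 0 →
      (f j = fun _ => (1 : ℝ)) ∧ (fac j = fun _ => (1 : ℝ)))
    (hspan :
      Submodule.span ℝ (Set.range (fun j : Fin K =>
          fun i => f (Fin.castLE hKN j) i * Real.sqrt (pibar i)))
        = Submodule.span ℝ (Set.range (fun j : Fin K =>
          fun i => fac (Fin.castLE hKN j) i * Real.sqrt (pibar i))))
    (y : Fin N → ℝ) (t : ℕ) (ht : 1 ≤ t)
    (hY : 0 < ∑ j ∈ Finset.univ.filter
        (fun j : Fin N => 1 ≤ (j : ℕ) ∧ (j : ℕ) < K),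
        (∑ i, y i * f j i * pibar i) ^ 2) :
    (Matrix.vecMul pibar PA = pibar ∧ Matrix.vecMul pibar PW = pibar) ∧
    ∃ ε > (0 : ℝ),
      (∑ j ∈ Finset.univ.filter (fun j : Fin N => (j : ℕ) ≠ 0),
          (∑ i, y i * fac j i * pibar i) ^ 2 * lamac j ^ t) + ε
        ≤ ∑ j ∈ Finset.univ.filter (fun j : Fin N => (j : ℕ) ≠ 0),
            (∑ i, y i * f j i * pibar i) ^ 2 * lam j ^ t :=
  stmt18_general hK hKN z hbal p r hr hpr h1 pibar hpibar A Abar W PA PW hA hAbar hW hPA hPW f fac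
    lam lamac ν μ hgap horth horthac hlam2 hlamz hconst hspan y t ht hY
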